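/- Let p > 2 and s ∈ (0,1) with sp < p−1, let α ∈ (0,1], and let γ satisfy sp/(p−1) < γ < min{1, sp/(p−2)}. Define ℓ(y) = y²(p−2) − (sp + 2(p−2))y + 2sp and ρ = (1/(4(p−1))) min_{y ∈ [0,γ]} ℓ(y). Then ρ > 0. Moreover, for every κ ∈ [sp/(p−1), γ), every integer m ≥ 3 with m > p(1−s)/(2(p−1)ρ), and κ₁ := min{ γ, κ + 1/(2(p−1)), κ + (sp − (p−2)γ)/(2(p−1)), κ + α/(p−1), κ + ρ }, the number θ := (κ₁(p−1) − sp)/(κ(p−2) + 2 − sp) satisfies θ ∈ (0,1), and κ₁(p−1) − sp < ((m−1)/m) κ + θ(κ(p−2) − sp). -/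

import Mathlib

/-- The quadratic `ℓ(y) = y²(p−2) − (sp + 2(p−2))y + 2sp`. -/
noncomputable def ellP (p s y : ℝ) : ℝ :=
  y ^ 2 * (p - 2) - (s * p + 2 * (p - 2)) * y + 2 * s * p

set_option maxHeartbeats 1000000 in
theorem stmt_16 (p s α γ : ℝ) (hp : 2 < p) (hs0 : 0 < s) (hs1 : s < 1)
    (hsp : s * p < p - 1) (hα0 : 0 < α) (hα1 : α ≤ 1)
    (hγ1 : s * p / (p - 1) < γ) (hγ2 : γ < min 1 (s * p / (p - 2))) :
    let ρ := sInf (ellP p s '' Set.Icc 0 γ) / (4 * (p - 1))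
    0 < ρ ∧
    ∀ κ : ℝ, s * p / (p - 1) ≤ κ → κ < γ →
    ∀ m : ℕ, 3 ≤ m → p * (1 - s) / (2 * (p - 1) * ρ) < (m : ℝ) →
    let κ₁ := min γ (min (κ + 1 / (2 * (p - 1)))
      (min (κ + (s * p - (p - 2) * γ) / (2 * (p - 1)))
        (min (κ + α / (p - 1)) (κ + ρ))))
    let θ := (κ₁ * (p - 1) - s * p) / (κ * (p - 2) + 2 - s * p)
    (0 < θ ∧ θ < 1) ∧
    κ₁ * (p - 1) - s * p < ((m : ℝ) - 1) / m * κ + θ * (κ * (p - 2) - s * p) := by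
  have hp1 : (0:ℝ) < p - 1 := by linarith
  have hp2' : (0:ℝ) < p - 2 := by linarith
  have hsp0 : 0 < s * p := mul_pos hs0 (by linarith)
  have hγ0 : 0 < γ := lt_trans (div_pos hsp0 hp1) hγ1
  have hγlt1 : γ < 1 := lt_of_lt_of_le hγ2 (min_le_left _ _)
  have hγsp : γ * (p - 2) < s * p := by
    have h := lt_of_lt_of_le hγ2 (min_le_right _ _)
    exact (lt_div_iff₀ hp2').mp h
  have hL0 : 0 < (2 - γ) * (s * p - (p - 2) * γ) := by
    apply mul_pos
    · linarith
    · nlinarith [mul_comm γ (p - 2)]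
  have hmem : ellP p s γ ∈ ellP p s '' Set.Icc 0 γ := ⟨γ, ⟨hγ0.le, le_refl γ⟩, rfl⟩
  have hlb : ∀ z ∈ ellP p s '' Set.Icc 0 γ, ellP p s γ ≤ z := by
    rintro z ⟨y, ⟨hy0, hyγ⟩, rfl⟩
    simp only [ellP]
    nlinarith [mul_nonneg (show (0:ℝ) ≤ γ - y by linarith)
      (show (0:ℝ) ≤ s * p + 2 * (p - 2) - (p - 2) * (y + γ) by
        nlinarith [mul_nonneg hp2'.le (show (0:ℝ) ≤ 2 - (y + γ) by linarith)])]
  have hsInf : sInf (ellP p s '' Set.Icc 0 γ) = ellP p s γ :=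
    IsLeast.csInf_eq ⟨hmem, hlb⟩
  intro ρ
  have hρ : ρ = (2 - γ) * (s * p - (p - 2) * γ) / (4 * (p - 1)) := by
    show sInf (ellP p s '' Set.Icc 0 γ) / (4 * (p - 1)) = _
    rw [hsInf]; simp only [ellP]; ring
  have hρ0 : 0 < ρ := by rw [hρ]; exact div_pos hL0 (by linarith)
  clear_value ρ
  refine ⟨hρ0, ?_⟩
  intro κ hκ1 hκ2 m hm3 hm
  intro κ₁ θ
  set M := (m : ℝ) with hMdef
  have hM3 : (3:ℝ) ≤ M := by rw [hMdef]; exact_mod_cast hm3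
  have hM0 : (0:ℝ) < M := by linarith
  have hκ0 : 0 < κ := lt_of_lt_of_le (div_pos hsp0 hp1) hκ1
  have hA0 : s * p ≤ κ * (p - 1) := (div_le_iff₀ hp1).mp hκ1
  have hκ₁def : κ₁ = min γ (min (κ + 1 / (2 * (p - 1)))
      (min (κ + (s * p - (p - 2) * γ) / (2 * (p - 1)))
        (min (κ + α / (p - 1)) (κ + ρ)))) := rfl
  have hθdef : θ = (κ₁ * (p - 1) - s * p) / (κ * (p - 2) + 2 - s * p) := rfl
  clear_value θ κ₁
  have hκ₁lb : s * p / (p - 1) < κ₁ := by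
    rw [hκ₁def]
    refine lt_min hγ1 (lt_min ?_ (lt_min ?_ (lt_min ?_ ?_)))
    · have h : 0 < 1 / (2 * (p - 1)) := by positivity
      linarith
    · have h : 0 < (s * p - (p - 2) * γ) / (2 * (p - 1)) :=
        div_pos (by nlinarith [mul_comm γ (p - 2)]) (by linarith)
      linarith
    · have h : 0 < α / (p - 1) := div_pos hα0 hp1
      linarith
    · linarith [hρ0]
  have hκ₁N : s * p < κ₁ * (p - 1) := (div_lt_iff₀ hp1).mp hκ₁lb
  have hD : 0 < κ * (p - 2) + 2 - s * p := by
    have hid : κ * (p - 2) = κ * (p - 1) - κ := by ring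
    linarith [hid, hA0, hκ2, hγlt1]
  have hθ0 : 0 < θ := by rw [hθdef]; exact div_pos (by linarith) hD
  have hκ₁half : κ₁ ≤ κ + 1 / (2 * (p - 1)) := by
    rw [hκ₁def]; exact le_trans (min_le_right _ _) (min_le_left _ _)
  have hκ₁ρ : κ₁ ≤ κ + ρ := by
    rw [hκ₁def]
    exact le_trans (min_le_right _ _) (le_trans (min_le_right _ _)
      (le_trans (min_le_right _ _) (min_le_right _ _)))
  have hθ1 : θ < 1 := by
    rw [hθdef, div_lt_one hD]
    have h1 : κ₁ * (p - 1) ≤ (κ + 1 / (2 * (p - 1))) * (p - 1) :=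
      mul_le_mul_of_nonneg_right hκ₁half hp1.le
    have h2 : (κ + 1 / (2 * (p - 1))) * (p - 1) = κ * (p - 1) + 1 / 2 := by
      field_simp
    have h3 : κ * (p - 1) = κ * (p - 2) + κ := by ring
    linarith
  refine ⟨⟨hθ0, hθ1⟩, ?_⟩
  have hpρ : (p - 1) * ρ = (2 - γ) * (s * p - (p - 2) * γ) / 4 := by
    rw [hρ]; field_simp
  have hM5 : p - s * p < M * ((2 - γ) * (s * p - (p - 2) * γ)) / 2 := by
    have h0 : 0 < 2 * (p - 1) * ρ := mul_pos (mul_pos two_pos hp1) hρ0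
    have h1 : p * (1 - s) < M * (2 * (p - 1) * ρ) := (div_lt_iff₀ h0).mp hm
    have h2 : M * (2 * (p - 1) * ρ) = M * ((2 - γ) * (s * p - (p - 2) * γ)) / 2 := by
      rw [hρ]; field_simp; ring
    have h3 : p * (1 - s) = p - s * p := by ring
    linarith
  have hN : κ₁ * (p - 1) ≤ κ * (p - 1) + (2 - γ) * (s * p - (p - 2) * γ) / 4 := by
    have h1 := mul_le_mul_of_nonneg_right hκ₁ρ hp1.le
    have h2 : (κ + ρ) * (p - 1) = κ * (p - 1) + (p - 1) * ρ := by ring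
    linarith
  have hℓκ : (2 - γ) * (s * p - (p - 2) * γ) ≤ (2 - κ) * (s * p - (p - 2) * κ) := by
    nlinarith [mul_nonneg (show (0:ℝ) ≤ γ - κ by linarith)
      (show (0:ℝ) ≤ s * p + 2 * (p - 2) - (p - 2) * (κ + γ) by
        nlinarith [mul_nonneg hp2'.le (show (0:ℝ) ≤ 2 - (κ + γ) by linarith)])]
  have hAγ : 2 * (κ * (p - 1) - s * p) + (2 - γ) * (s * p - (p - 2) * γ) < p - s * p := by
    nlinarith [mul_pos (show (0:ℝ) < 1 - γ by linarith)
        (show (0:ℝ) < p - s * p + γ * (p - 2) by nlinarith),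
      mul_lt_mul_of_pos_right hκ2 hp1]
  have hcore : 2 * (κ₁ * (p - 1) - s * p) * M < (M - 1) * κ * (κ * (p - 2) + 2 - s * p) := by
    nlinarith [mul_nonneg (show (0:ℝ) ≤ M - 1 by linarith)
        (show (0:ℝ) ≤ (2 - κ) * (s * p - (p - 2) * κ) - (2 - γ) * (s * p - (p - 2) * γ) by
          linarith),
      mul_nonneg (show (0:ℝ) ≤ 2 * M by linarith)
        (show (0:ℝ) ≤ κ * (p - 1) + (2 - γ) * (s * p - (p - 2) * γ) / 4 - κ₁ * (p - 1) by
          linarith),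
      hAγ, hM5, hL0, hM3, hA0]
  have hθD : θ * (κ * (p - 2) + 2 - s * p) = κ₁ * (p - 1) - s * p := by
    rw [hθdef]; exact div_mul_cancel₀ _ hD.ne'
  have hsub : θ * (κ * (p - 2) - s * p) = (κ₁ * (p - 1) - s * p) - 2 * θ := by
    rw [← hθD]; ring
  have hθM : 2 * θ < (M - 1) / M * κ := by
    rw [hθdef,
      show 2 * ((κ₁ * (p - 1) - s * p) / (κ * (p - 2) + 2 - s * p)) =
        (2 * (κ₁ * (p - 1) - s * p)) / (κ * (p - 2) + 2 - s * p) from by ring,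
      show (M - 1) / M * κ = ((M - 1) * κ) / M from by ring,
      div_lt_div_iff₀ hD hM0]
    linarith [hcore]
  rw [hsub]
  linarith [hθM]
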